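/- arXiv:0810.3884 — 5 statements merged into one kernel-verified Lean document; each statement's English description precedes it below -/
import Mathlib

section
/- Let b ≥ 1 and r ≥ 1 be integers, let c_1, …, c_b ∈ ℂ be pairwise distinct, let r_1, …, r_b be positive integers with r = r_1 + ⋯ + r_b, and let a_1, …, a_r ∈ ℂ be a list in which each value c_l occurs exactly r_l times. For λ ∈ ℂ^r define B_λ(Y) = Σ_{i=1}^r λ_i ∏_{j≠i} (Y − a_j) and H_λ(Y) = B_λ(Y) / ∏_{l=1}^b (Y − c_l)^{r_l − 1} ∈ ℂ[Y]. Then there exists a nonzero polynomial D in r variables over ℂ such that for every λ ∈ ℂ^r with D(λ) ≠ 0, the polynomial H_λ has degree exactly b − 1 and has exactly b − 1 distinct roots in ℂ. In particular the set of such λ contains a nonempty Zariski-open subset of ℂ^r (for instance λ = (1, 0, …, 0) has the property). -/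
/-!
Every `a_j` equals some `c_{L j}`, so each cofactor `∏_{j ≠ i} (Y - a_j)` is `P` times the nodal
polynomial `Q_l = ∏_{k ≠ l} (Y - c_k)` at `l = L i`, and `H_λ = ∑ λ_i Q_{L i}` has degree at most
`b - 1`. For a polynomial `f` of degree at most `d`, the product of its coefficient of `Y^d` with
the resultant of `f` and `f'` in the sizes `d`, `d - 1` is nonzero exactly when `f` has degree `d`
and is separable; applied to the generic `H_λ` this gives `D`. At `λ = (1, 0, …, 0)` the polynomial
`H_λ` is a single `Q_l`, separable because the `c_k` are distinct, so `D ≠ 0`.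
-/

open Polynomial Finset

namespace Polynomial

variable {R : Type*} [CommRing R]

/-- The sizes are fixed instead of read off from `f`, so that this commutes with ring
homomorphisms. -/
noncomputable def formalDiscr (f : R[X]) (d : ℕ) : R :=
  f.coeff d * f.resultant (derivative f) d (d - 1)

theorem map_formalDiscr {S : Type*} [CommRing S] (φ : R →+* S) (f : R[X]) (d : ℕ) :
    φ (f.formalDiscr d) = (f.map φ).formalDiscr d := by
  rw [formalDiscr, formalDiscr, map_mul, coeff_map, derivative_map, resultant_map_map]

theorem formalDiscr_ne_zero_iff {K : Type*} [Field K] [CharZero K] {f : K[X]} {d : ℕ}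
    (hf : f.natDegree ≤ d) : f.formalDiscr d ≠ 0 ↔ f.natDegree = d ∧ f.Separable := by
  constructor
  · intro h
    have hcoeff := left_ne_zero_of_mul h
    have hdeg : f.natDegree = d := hf.antisymm (le_natDegree_of_ne_zero hcoeff)
    have hf0 : f ≠ 0 := by rintro rfl; simp at hcoeff
    have hres := right_ne_zero_of_mul h
    rw [← hdeg, ← natDegree_derivative, Ne, resultant_eq_zero_iff] at hres
    exact ⟨hdeg, (separable_def f).2 (by simpa [hf0] using hres)⟩
  · rintro ⟨rfl, hsep⟩
    refine mul_ne_zero (leadingCoeff_ne_zero.2 hsep.ne_zero) ?_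
    rw [← natDegree_derivative]
    exact resultant_ne_zero _ _ hsep

theorem Separable.card_roots_toFinset {K : Type*} [Field K] [IsAlgClosed K] [DecidableEq K]
    {f : K[X]} (hf : f.Separable) : f.roots.toFinset.card = f.natDegree := by
  rw [Multiset.toFinset_card_of_nodup (nodup_roots hf),
    ← (IsAlgClosed.splits f).natDegree_eq_card_roots]

end Polynomial

theorem Finset.exists_eq_of_sum_card_filter_eq {ι κ α : Type*} [Fintype ι] [Fintype κ]
    [DecidableEq α] {a : ι → α} {c : κ → α} (hc : Function.Injective c)
    (h : ∑ l, #{i | a i = c l} = Fintype.card ι) (i : ι) : ∃ l, a i = c l := by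
  classical
  have hcover : univ.biUnion (fun l => ({i | a i = c l} : Finset ι)) = univ := by
    refine eq_univ_of_card _ ?_
    rw [card_biUnion fun l _ l' _ hll' =>
      disjoint_filter.2 fun j _ (hj : a j = c l) hj' => hll' (hc (hj.symm.trans hj')), h]
  simpa using hcover.ge (mem_univ i)

namespace Lagrange

variable {R : Type*} [CommRing R] {ι κ : Type*} [Fintype ι] [Fintype κ] [DecidableEq κ]

noncomputable def nodalEraseSum (c : κ → R) (L : ι → κ) (w : ι → R) : R[X] :=
  ∑ i, C (w i) * nodal (univ.erase (L i)) c

theorem map_nodalEraseSum {S : Type*} [CommRing S] (φ : R →+* S) (c : κ → R) (L : ι → κ)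
    (w : ι → R) : (nodalEraseSum c L w).map φ = nodalEraseSum (φ ∘ c) L (φ ∘ w) := by
  simp [nodalEraseSum, nodal, Polynomial.map_sum, Polynomial.map_prod]

theorem natDegree_nodalEraseSum_le [Nontrivial R] (c : κ → R) (L : ι → κ) (w : ι → R) :
    (nodalEraseSum c L w).natDegree ≤ Fintype.card κ - 1 :=
  natDegree_sum_le_of_forall_le _ _ fun i _ => (natDegree_C_mul_le _ _).trans <| by
    rw [natDegree_nodal, card_erase_of_mem (mem_univ _), card_univ]

theorem nodalEraseSum_ite_eq [DecidableEq ι] (c : κ → R) (L : ι → κ) (i : ι) :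
    nodalEraseSum c L (fun j => if j = i then 1 else 0) = nodal (univ.erase (L i)) c := by
  simp [nodalEraseSum]

theorem prod_erase_X_sub_C_comp_eq [IsDomain R] [DecidableEq ι] (c : κ → R) {L : ι → κ}
    (hL : Function.Surjective L) (i : ι) :
    ∏ j ∈ univ.erase i, (X - C (c (L j))) =
      (∏ l, (X - C (c l)) ^ (#{j | L j = l} - 1)) * nodal (univ.erase (L i)) c := by
  refine mul_left_cancel₀ (X_sub_C_ne_zero (c (L i))) ?_
  have hfiber : ∀ l, 0 < #{j | L j = l} := fun l =>
    let ⟨j, hj⟩ := hL l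
    card_pos.2 ⟨j, by simpa using hj⟩
  calc (X - C (c (L i))) * ∏ j ∈ univ.erase i, (X - C (c (L j)))
      = ∏ l, (X - C (c l)) ^ #{j | L j = l} := by
        rw [mul_prod_erase _ (fun j => X - C (c (L j))) (mem_univ i),
          ← prod_fiberwise' univ L (fun l => X - C (c l))]
        simp
    _ = (∏ l, (X - C (c l)) ^ (#{j | L j = l} - 1)) * nodal univ c := by
        rw [nodal, ← prod_mul_distrib]
        exact prod_congr rfl fun l _ => (pow_sub_one_mul (hfiber l).ne' _).symm
    _ = _ := by
        rw [nodal_eq_mul_nodal_erase (mem_univ (L i))]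
        ring

theorem sum_C_mul_prod_erase_X_sub_C_comp_eq [IsDomain R] [DecidableEq ι] (c : κ → R)
    {L : ι → κ} (hL : Function.Surjective L) (w : ι → R) :
    ∑ i, C (w i) * ∏ j ∈ univ.erase i, (X - C (c (L j))) =
      (∏ l, (X - C (c l)) ^ (#{j | L j = l} - 1)) * nodalEraseSum c L w := by
  simp_rw [prod_erase_X_sub_C_comp_eq c hL, nodalEraseSum, mul_sum, mul_left_comm]

end Lagrange

open Lagrange

theorem stmt1_general (b r : ℕ) (hr : 1 ≤ r)
    (c : Fin b → ℂ) (hc : Function.Injective c)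
    (m : Fin b → ℕ) (hm : ∀ l, 0 < m l) (hsum : r = ∑ l, m l)
    (a : Fin r → ℂ)
    (ha : ∀ l, (Finset.univ.filter fun i => a i = c l).card = m l)
    (B : (Fin r → ℂ) → Polynomial ℂ)
    (hB : ∀ lam : Fin r → ℂ, B lam =
      ∑ i, Polynomial.C (lam i) *
        ∏ j ∈ Finset.univ.erase i, (X - Polynomial.C (a j)))
    (P : Polynomial ℂ)
    (hP : P = ∏ l, (X - Polynomial.C (c l)) ^ (m l - 1)) :
    (∃ D : MvPolynomial (Fin r) ℂ, D ≠ 0 ∧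
      ∀ lam : Fin r → ℂ, MvPolynomial.eval lam D ≠ 0 →
        (B lam / P).natDegree = b - 1 ∧
        (B lam / P).roots.toFinset.card = b - 1) ∧
    ((B (fun i => if i = (⟨0, hr⟩ : Fin r) then 1 else 0) / P).natDegree = b - 1 ∧
      (B (fun i => if i = (⟨0, hr⟩ : Fin r) then 1 else 0) / P).roots.toFinset.card = b - 1) := by
  obtain ⟨L, rfl⟩ : ∃ L : Fin r → Fin b, a = c ∘ L := by
    choose L hL using exists_eq_of_sum_card_filter_eq (a := a) hc
      (by simp only [ha, Fintype.card_fin, hsum.symm])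
    exact ⟨L, funext hL⟩
  have hfiber : ∀ l, #{i | L i = l} = m l := by simpa [hc.eq_iff] using ha
  have hL : Function.Surjective L := fun l => by
    obtain ⟨i, hi⟩ := card_pos.1 (((hfiber l).symm ▸ hm l : 0 < #{i | L i = l}))
    exact ⟨i, (mem_filter.1 hi).2⟩
  have hBP : ∀ lam, B lam / P = nodalEraseSum c L lam := fun lam => by
    have hPmonic : P.Monic := hP ▸ monic_prod_of_monic _ _ fun l _ => (monic_X_sub_C _).pow _
    simp_rw [← hfiber] at hP
    rw [hB, Function.comp_def, sum_C_mul_prod_erase_X_sub_C_comp_eq c hL, ← hP,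
      mul_div_cancel_left₀ _ hPmonic.ne_zero]
  set F := nodalEraseSum (MvPolynomial.C ∘ c) L MvPolynomial.X
  have hspec : ∀ lam, MvPolynomial.eval lam (F.formalDiscr (b - 1)) ≠ 0 ↔
      (nodalEraseSum c L lam).natDegree = b - 1 ∧ (nodalEraseSum c L lam).Separable := by
    intro lam
    rw [map_formalDiscr, map_nodalEraseSum]
    simp only [Function.comp_def, MvPolynomial.eval_C, MvPolynomial.eval_X]
    exact formalDiscr_ne_zero_iff (by simpa using natDegree_nodalEraseSum_le c L lam)
  have hgood : ∀ lam, MvPolynomial.eval lam (F.formalDiscr (b - 1)) ≠ 0 →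
      (B lam / P).natDegree = b - 1 ∧ (B lam / P).roots.toFinset.card = b - 1 := by
    intro lam hlam
    obtain ⟨hdeg, hsep⟩ := (hspec lam).1 hlam
    rw [hBP]
    exact ⟨hdeg, hsep.card_roots_toFinset.trans hdeg⟩
  have hgood₀ : MvPolynomial.eval (fun i => if i = (⟨0, hr⟩ : Fin r) then 1 else 0)
      (F.formalDiscr (b - 1)) ≠ 0 := by
    rw [hspec, nodalEraseSum_ite_eq, natDegree_nodal, card_erase_of_mem (mem_univ _), card_univ,
      Fintype.card_fin, nodal_eq, separable_prod_X_sub_C_iff']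
    exact ⟨rfl, fun x _ y _ hxy => hc hxy⟩
  exact ⟨⟨_, fun h => hgood₀ (by rw [h, map_zero]), hgood⟩, hgood _ hgood₀⟩

/-- There is a nonzero polynomial `D` in the `r` variables `λ` such that
whenever `D(λ) ≠ 0`, the quotient `H_λ = B_λ / ∏_l (Y − c_l)^(m l − 1)` has degree
exactly `b − 1` and exactly `b − 1` distinct roots in `ℂ`; moreover
`λ = (1, 0, …, 0)` has this property. -/
theorem stmt1 (b r : ℕ) (hb : 1 ≤ b) (hr : 1 ≤ r)
    (c : Fin b → ℂ) (hc : Function.Injective c)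
    (m : Fin b → ℕ) (hm : ∀ l, 0 < m l) (hsum : r = ∑ l, m l)
    (a : Fin r → ℂ)
    (ha : ∀ l, (Finset.univ.filter fun i => a i = c l).card = m l)
    (B : (Fin r → ℂ) → Polynomial ℂ)
    (hB : ∀ lam : Fin r → ℂ, B lam =
      ∑ i, Polynomial.C (lam i) *
        ∏ j ∈ Finset.univ.erase i, (X - Polynomial.C (a j)))
    (P : Polynomial ℂ)
    (hP : P = ∏ l, (X - Polynomial.C (c l)) ^ (m l - 1)) :
    (∃ D : MvPolynomial (Fin r) ℂ, D ≠ 0 ∧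
      ∀ lam : Fin r → ℂ, MvPolynomial.eval lam D ≠ 0 →
        (B lam / P).natDegree = b - 1 ∧
        (B lam / P).roots.toFinset.card = b - 1) ∧
    ((B (fun i => if i = (⟨0, hr⟩ : Fin r) then 1 else 0) / P).natDegree = b - 1 ∧
      (B (fun i => if i = (⟨0, hr⟩ : Fin r) then 1 else 0) / P).roots.toFinset.card = b - 1) :=
  stmt1_general b r hr c hc m hm hsum a ha B hB P hP
end

section
/- Let b ≥ 2 be an integer and let φ_1, …, φ_{b−1} ∈ ℂ be pairwise distinct and nonzero. For μ = (μ_1, …, μ_{b−1}) ∈ ℂ^{b−1} define H_μ(v) = v · Σ_{s=1}^{b−1} μ_s ∏_{j≠s} (v² − φ_j) ∈ ℂ[v]. Then there exists a nonzero polynomial D in b − 1 variables over ℂ such that for every μ with D(μ) ≠ 0, the polynomial H_μ has exactly 2(b−1) − 1 = 2b − 3 distinct roots in ℂ; in particular such μ exist. -/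
/-!
With `P_μ(t) = Σ_s μ_s ∏_{j≠s} (t - φ_j)` one has `H_μ = X · P_μ(X²)`. If `P_μ` has degree `b - 2`,
simple roots and `P_μ(0) ≠ 0`, then `X · P_μ(X²)` is separable (its roots are `0` and the two square
roots of each root of `P_μ`), so it has `2(b - 2) + 1` distinct roots. Those three conditions on
`P_μ` say that its leading coefficient, its constant coefficient and its resultant with `P_μ'`
are nonzero; each is a polynomial in `μ`, so their product is the required `D`. Taking `μ` to be a
coordinate vector, `P_μ = ∏_{j≠s} (t - φ_j)` satisfies all three, whence `D ≠ 0`.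
-/

open Polynomial Finset

namespace Polynomial

section Discr

variable {R S : Type*} [CommRing R] [CommRing S]

/-- The resultant is taken with the fixed sizes `m, m - 1` rather than the actual degrees, so
that the construction commutes with ring homomorphisms. -/
noncomputable def separabilityDiscr (P : R[X]) (m : ℕ) : R :=
  P.coeff m * P.coeff 0 * resultant P (derivative P) m (m - 1)

theorem separabilityDiscr_map (f : R →+* S) (P : R[X]) (m : ℕ) :
    separabilityDiscr (P.map f) m = f (separabilityDiscr P m) := by
  rw [separabilityDiscr, separabilityDiscr, derivative_map, resultant_map_map, coeff_map,
    coeff_map, map_mul, map_mul]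

end Discr

variable {K : Type*} [Field K]

theorem separable_iff_resultant_derivative_ne_zero [CharZero K] {P : K[X]} (hP : P ≠ 0) :
    P.Separable ↔ resultant P (derivative P) P.natDegree (P.natDegree - 1) ≠ 0 := by
  rw [← natDegree_derivative, ne_eq, resultant_eq_zero_iff]
  simp [Separable, hP]

theorem separabilityDiscr_ne_zero_iff [CharZero K] {P : K[X]} {m : ℕ} (hP : P.natDegree ≤ m) :
    separabilityDiscr P m ≠ 0 ↔ P.natDegree = m ∧ P.coeff 0 ≠ 0 ∧ P.Separable := by
  simp only [separabilityDiscr, ne_eq, mul_eq_zero, not_or]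
  constructor
  · rintro ⟨⟨hm, h0⟩, hres⟩
    have hP0 : P ≠ 0 := fun h => hm (by simp [h])
    obtain rfl : P.natDegree = m := le_antisymm hP (le_natDegree_of_ne_zero hm)
    exact ⟨rfl, h0, (separable_iff_resultant_derivative_ne_zero hP0).2 hres⟩
  · rintro ⟨rfl, h0, hsep⟩
    exact ⟨⟨leadingCoeff_ne_zero.2 hsep.ne_zero, h0⟩,
      (separable_iff_resultant_derivative_ne_zero hsep.ne_zero).1 hsep⟩

theorem separable_X_mul_comp_X_sq [NeZero (2 : K)] {p : K[X]} (hp : p.Separable)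
    (h0 : p.coeff 0 ≠ 0) : (X * p.comp (X ^ 2)).Separable := by
  have hX : IsCoprime X (p.comp (X ^ 2)) := by
    rwa [irreducible_X.coprime_iff_not_dvd, X_dvd_iff, coeff_zero_eq_eval_zero, eval_comp,
      eval_pow, eval_X, zero_pow two_ne_zero, ← coeff_zero_eq_eval_zero]
  refine separable_X.mul ?_ hX
  rw [Separable, derivative_comp, derivative_X_pow, mul_assoc,
    isCoprime_mul_unit_left_right (isUnit_C.2 (NeZero.ne _).isUnit), Nat.add_one_sub_one, pow_one]
  exact hX.symm.mul_right (IsCoprime.map hp (compRingHom (X ^ 2)))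

theorem card_roots_toFinset_X_mul_comp_X_sq [IsAlgClosed K] [NeZero (2 : K)] [DecidableEq K]
    {p : K[X]} (hp : p.Separable) (h0 : p.coeff 0 ≠ 0) :
    (X * p.comp (X ^ 2)).roots.toFinset.card = 2 * p.natDegree + 1 := by
  have hsep := separable_X_mul_comp_X_sq hp h0
  rw [Multiset.toFinset_card_of_nodup (nodup_roots hsep),
    ← (IsAlgClosed.splits _).natDegree_eq_card_roots,
    natDegree_X_mul (right_ne_zero_of_mul hsep.ne_zero), natDegree_comp, natDegree_X_pow,
    mul_comm]

end Polynomial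

namespace Lagrange

section NodalCombination

variable {R S ι : Type*} [CommRing R] [CommRing S] [Fintype ι] [DecidableEq ι]

noncomputable def nodalCombination (v μ : ι → R) : R[X] :=
  ∑ i, C (μ i) * nodal (univ.erase i) v

theorem map_nodalCombination (f : R →+* S) (v μ : ι → R) :
    (nodalCombination v μ).map f = nodalCombination (f ∘ v) (f ∘ μ) := by
  simp [nodalCombination, nodal, Polynomial.map_sum, Polynomial.map_prod]

theorem nodalCombination_comp (v μ : ι → R) (q : R[X]) :
    (nodalCombination v μ).comp q = ∑ i, C (μ i) * ∏ j ∈ univ.erase i, (q - C (v j)) := by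
  simp [nodalCombination, nodal, Polynomial.sum_comp, Polynomial.prod_comp]

theorem nodalCombination_single (v : ι → R) (i : ι) :
    nodalCombination v (Pi.single i 1) = nodal (univ.erase i) v := by
  rw [nodalCombination, sum_eq_single i (fun j _ hj => by simp [hj]) (by simp)]
  simp

theorem natDegree_nodalCombination_le [Nontrivial R] (v μ : ι → R) :
    (nodalCombination v μ).natDegree ≤ Fintype.card ι - 1 :=
  natDegree_sum_le_of_forall_le _ _ fun i _ =>
    (natDegree_C_mul_le _ _).trans (by simp [natDegree_nodal, card_erase_of_mem])

theorem eval_separabilityDiscr_nodalCombination (v μ : ι → R) (m : ℕ) :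
    MvPolynomial.eval μ
        (separabilityDiscr (nodalCombination (MvPolynomial.C ∘ v) MvPolynomial.X) m) =
      separabilityDiscr (nodalCombination v μ) m := by
  rw [← separabilityDiscr_map, map_nodalCombination]
  congr 2 <;> ext <;> simp

end NodalCombination

theorem separabilityDiscr_nodal_erase_ne_zero {K ι : Type*} [Field K] [CharZero K] [Fintype ι]
    [DecidableEq ι] {v : ι → K} (hinj : Function.Injective v)
    (hne : ∀ j, v j ≠ 0) (i : ι) :
    separabilityDiscr (nodal (univ.erase i) v) (Fintype.card ι - 1) ≠ 0 := by
  rw [separabilityDiscr_ne_zero_iff (by simp [natDegree_nodal, card_erase_of_mem])]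
  refine ⟨by simp [natDegree_nodal, card_erase_of_mem], ?_, ?_⟩
  · simp [coeff_zero_eq_eval_zero, eval_nodal, prod_ne_zero_iff, hne]
  · exact nodal_eq _ v ▸ separable_prod_X_sub_C_iff'.2 fun _ _ _ _ h => hinj h

end Lagrange

open Lagrange

/-- For pairwise distinct nonzero `φ_1, …, φ_{b−1}` and
`H_μ(v) = v · Σ_s μ_s ∏_{j≠s} (v² − φ_j)`, there is a nonzero polynomial `D` in
the `b − 1` variables `μ` such that whenever `D(μ) ≠ 0` the polynomial `H_μ` has
exactly `2b − 3` distinct roots in `ℂ`; in particular such `μ` exist. -/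
theorem stmt3 (b : ℕ) (hb : 2 ≤ b) (φ : Fin (b - 1) → ℂ)
    (hinj : Function.Injective φ) (hne : ∀ j, φ j ≠ 0)
    (H : (Fin (b - 1) → ℂ) → Polynomial ℂ)
    (hH : ∀ μ : Fin (b - 1) → ℂ, H μ =
      X * ∑ s, Polynomial.C (μ s) *
        ∏ j ∈ Finset.univ.erase s, (X ^ 2 - Polynomial.C (φ j))) :
    (∃ D : MvPolynomial (Fin (b - 1)) ℂ, D ≠ 0 ∧
      ∀ μ : Fin (b - 1) → ℂ, MvPolynomial.eval μ D ≠ 0 →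
        (H μ).roots.toFinset.card = 2 * b - 3) ∧
    ∃ μ : Fin (b - 1) → ℂ, (H μ).roots.toFinset.card = 2 * b - 3 := by
  have hcard : Fintype.card (Fin (b - 1)) - 1 = b - 2 := by simp; omega
  set D := separabilityDiscr (nodalCombination (MvPolynomial.C ∘ φ) MvPolynomial.X) (b - 2)
  have hdeg (μ : Fin (b - 1) → ℂ) : (nodalCombination φ μ).natDegree ≤ b - 2 :=
    hcard ▸ natDegree_nodalCombination_le φ μ
  have hcount (μ : Fin (b - 1) → ℂ) (hμ : MvPolynomial.eval μ D ≠ 0) :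
      (H μ).roots.toFinset.card = 2 * b - 3 := by
    rw [eval_separabilityDiscr_nodalCombination, separabilityDiscr_ne_zero_iff (hdeg μ)] at hμ
    obtain ⟨hm, h0, hsep⟩ := hμ
    rw [hH, ← nodalCombination_comp, card_roots_toFinset_X_mul_comp_X_sq hsep h0, hm]
    omega
  obtain ⟨μ₀, hμ₀⟩ : ∃ μ₀, MvPolynomial.eval μ₀ D ≠ 0 := by
    refine ⟨Pi.single ⟨0, by omega⟩ 1, ?_⟩
    rw [eval_separabilityDiscr_nodalCombination, nodalCombination_single]
    exact hcard ▸ separabilityDiscr_nodal_erase_ne_zero hinj hne _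
  exact ⟨⟨D, fun h => hμ₀ (by simp [h]), hcount⟩, μ₀, hcount μ₀ hμ₀⟩
end

section
/- Let μ ∈ ℝ with μ ≥ 1, let h ≥ 2 be an integer, let k ∈ ℝ, and set ε = (μh − 1)/(h − 1). Suppose (i₀, j₀) and (i₁, j₁) are pairs of integers with 0 ≤ j₀ < j₁, such that i₀ + ε·j₀ ≤ k − 1 and i₁ + μ·j₁ ≥ k − μ. Then i₀ − i₁ < 2μ·(j₁ − j₀). -/
theorem le_mul_sub_one_div_sub_one {μ h : ℝ} (hμ : 1 ≤ μ) (hh : 1 < h) :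
    μ ≤ (μ * h - 1) / (h - 1) := by
  rw [le_div_iff₀ (sub_pos.2 hh)]
  linarith

theorem sub_lt_two_mul_sub_of_slope_bounds {μ ε k i₀ j₀ i₁ j₁ : ℝ} (hμ : 0 ≤ μ) (hμε : μ ≤ ε)
    (hj₀ : 0 ≤ j₀) (hj : j₀ + 1 ≤ j₁) (h₀ : i₀ + ε * j₀ ≤ k - 1) (h₁ : k - μ ≤ i₁ + μ * j₁) :
    i₀ - i₁ < 2 * μ * (j₁ - j₀) := by
  have hεj₀ : μ * j₀ ≤ ε * j₀ := mul_le_mul_of_nonneg_right hμε hj₀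
  have hμj : μ ≤ μ * (j₁ - j₀) := le_mul_of_one_le_right hμ (by linarith)
  calc i₀ - i₁ ≤ μ * (j₁ - j₀) + (μ - 1) := by linarith
    _ < μ * (j₁ - j₀) + μ * (j₁ - j₀) := by linarith
    _ = 2 * μ * (j₁ - j₀) := by ring

/-- the Newton-polygon inequality from the finiteness theorem:
if `μ ≥ 1`, `h ≥ 2`, `ε = (μh − 1)/(h − 1)`, `0 ≤ j₀ < j₁`,
`i₀ + ε·j₀ ≤ k − 1` and `i₁ + μ·j₁ ≥ k − μ`, then `i₀ − i₁ < 2μ·(j₁ − j₀)`. -/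
theorem stmt7 (μ : ℝ) (hμ : 1 ≤ μ) (h : ℕ) (hh : 2 ≤ h) (k : ℝ)
    (ε : ℝ) (hε : ε = (μ * (h : ℝ) - 1) / ((h : ℝ) - 1))
    (i₀ j₀ i₁ j₁ : ℤ) (hj₀ : 0 ≤ j₀) (hj : j₀ < j₁)
    (h₀ : (i₀ : ℝ) + ε * (j₀ : ℝ) ≤ k - 1)
    (h₁ : (i₁ : ℝ) + μ * (j₁ : ℝ) ≥ k - μ) :
    (i₀ : ℝ) - (i₁ : ℝ) < 2 * μ * ((j₁ : ℝ) - (j₀ : ℝ)) := by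
  have hμε : μ ≤ ε := hε ▸ le_mul_sub_one_div_sub_one hμ (Nat.one_lt_cast.2 hh)
  exact sub_lt_two_mul_sub_of_slope_bounds (by linarith) hμε (by exact_mod_cast hj₀)
    (by exact_mod_cast hj) h₀ h₁
end

section
/- Let f = y·(y − x²)·(2y − (1 + i√3)·x²) ∈ ℂ[x, y]. Then for all but finitely many points [a : b] of the complex projective line, the polar a·∂f/∂x + b·∂f/∂y, regarded as an element of the formal power series ring ℂ⟦x, y⟧, is irreducible. -/
/-!
Give `x` weight 1 and `y` weight 2, and let `c = 1 + i√3`. The polar `P = a f_x + b f_y` has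
weighted order 4, and since `c² - 2c + 4 = 0` its weight-4 part
`b f_y = b (6y² - 2(c+2)x²y + cx⁴)` is the square `6b (y - λx²)²` with `λ = (c+2)/6`.
If `P = G H` with `G`, `H` non-units, the coefficients of `x²`, `xy`, `y²` force `G` and `H` to
have weighted order 2, and then their weight-2 parts are both multiples of `y - λx²`. Hence the
weight-5 part `G₂H₃ + G₃H₂` of `P` vanishes on the branch `y = λx²`. But the weight-5 part
of `P` is `a f_x`, which equals `(c(c+2)/3) a x⁵` there, so `P` is irreducible whenever `a b ≠ 0`,
that is, away from the two points `[1 : 0]` and `[0 : 1]`.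
-/

theorem Finsupp.single_add_single_fin_two {M : Type*} [AddZeroClass M] (d : Fin 2 →₀ M) :
    Finsupp.single 0 (d 0) + Finsupp.single 1 (d 1) = d := by
  ext a; fin_cases a <;> simp

namespace MvPowerSeries

variable {R : Type*}

noncomputable abbrev coeff₂ [Semiring R] (i j : ℕ) : MvPowerSeries (Fin 2) R →ₗ[R] R :=
  coeff (Finsupp.single 0 i + Finsupp.single 1 j)

theorem coeff₂_zero_zero [Semiring R] (F : MvPowerSeries (Fin 2) R) :
    coeff₂ 0 0 F = constantCoeff F := by
  simp [coeff₂]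

open _root_.Finset in
theorem coeff₂_mul [CommSemiring R] (G H : MvPowerSeries (Fin 2) R) (i j : ℕ) :
    coeff₂ i j (G * H) = ∑ p ∈ antidiagonal i, ∑ q ∈ antidiagonal j,
      coeff₂ p.1 q.1 G * coeff₂ p.2 q.2 H := by
  rw [coeff₂, coeff_mul, ← sum_product']
  refine sum_nbij' (fun x => ((x.1 0, x.2 0), (x.1 1, x.2 1)))
    (fun y => (Finsupp.single 0 y.1.1 + Finsupp.single 1 y.2.1,
      Finsupp.single 0 y.1.2 + Finsupp.single 1 y.2.2)) ?_ ?_ ?_ ?_ ?_ <;>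
  intro x hx <;>
  simp_all [coeff₂, Finsupp.single_add_single_fin_two, Finsupp.ext_iff, Fin.forall_fin_two]

theorem coeff₂_C_mul_X_pow_mul_X_pow [CommSemiring R] (r : R) (m n i j : ℕ) :
    coeff₂ i j (C r * X 0 ^ m * X 1 ^ n) = if i = m ∧ j = n then r else 0 := by
  simp [coeff₂, X_pow_eq, monomial_mul_monomial, ← monomial_zero_eq_C, coeff_monomial,
    Finsupp.ext_iff, Fin.forall_fin_two]

theorem coeff₂_eq_zero_of_lt_weightedOrder [Semiring R] {F : MvPowerSeries (Fin 2) R} {i j : ℕ}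
    (h : ((i + 2 * j : ℕ) : ℕ∞) < F.weightedOrder ![1, 2]) : coeff₂ i j F = 0 :=
  coeff_eq_zero_of_lt_weightedOrder ![1, 2] <| by
    simpa [Finsupp.weight_single, mul_comm] using h

theorem le_weightedOrder_of_coeff₂ [Semiring R] {F : MvPowerSeries (Fin 2) R} {n : ℕ}
    (h : ∀ i j, i + 2 * j < n → coeff₂ i j F = 0) : n ≤ F.weightedOrder ![1, 2] := by
  refine nat_le_weightedOrder _ fun d hd => ?_
  rw [← Finsupp.single_add_single_fin_two d]
  exact h _ _ (by simpa [Finsupp.weight_apply, Finsupp.sum_fintype, mul_comm] using hd)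

/-- The value at `(x, y) = (1, l)` of the weight-5 part of `F`, for the weights `x ↦ 1, y ↦ 2`. -/
noncomputable def weightFiveAt [Semiring R] (l : R) (F : MvPowerSeries (Fin 2) R) : R :=
  l ^ 2 * coeff₂ 1 2 F + l * coeff₂ 3 1 F + coeff₂ 5 0 F

/-- If `(g₁ y + g₂ x²) (h₁ y + h₂ x²) = u (y - l x²)²` with `u ≠ 0`, both factors are
multiples of `y - l x²`. -/
theorem eq_neg_mul_of_mul_eq_sq {k : Type*} [CommRing k] [NoZeroDivisors k]
    {g₁ g₂ h₁ h₂ u l : k} (hu : u ≠ 0) (h₁₁ : g₁ * h₁ = u)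
    (h₁₂ : g₁ * h₂ + g₂ * h₁ = -2 * l * u) (h₂₂ : g₂ * h₂ = l ^ 2 * u) :
    g₂ = -l * g₁ ∧ h₂ = -l * h₁ := by
  have hg₁ : g₁ ≠ 0 := left_ne_zero_of_mul (h₁₁ ▸ hu)
  have hh₁ : h₁ ≠ 0 := right_ne_zero_of_mul (h₁₁ ▸ hu)
  have hprod : (g₂ + l * g₁) * (h₂ + l * h₁) = 0 := by
    linear_combination h₂₂ + l * h₁₂ + l ^ 2 * h₁₁
  rcases mul_eq_zero.mp hprod with hg | hh
  · refine ⟨by linear_combination hg, ?_⟩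
    have : g₁ * (h₂ + l * h₁) = 0 := by linear_combination h₁₂ - h₁ * hg + 2 * l * h₁₁
    linear_combination (mul_eq_zero.mp this).resolve_left hg₁
  · refine ⟨?_, by linear_combination hh⟩
    have : h₁ * (g₂ + l * g₁) = 0 := by linear_combination h₁₂ - g₁ * hh + 2 * l * h₁₁
    linear_combination (mul_eq_zero.mp this).resolve_left hh₁

theorem weightFiveAt_mul_eq_zero {k : Type*} [Field k] {G H : MvPowerSeries (Fin 2) k} {u l : k}
    (hG : constantCoeff G = 0) (hH : constantCoeff H = 0) (hu : u ≠ 0)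
    (h20 : coeff₂ 2 0 (G * H) = 0) (h11 : coeff₂ 1 1 (G * H) = 0)
    (h02 : coeff₂ 0 2 (G * H) = u) (h21 : coeff₂ 2 1 (G * H) = -2 * l * u)
    (h40 : coeff₂ 4 0 (G * H) = l ^ 2 * u) :
    weightFiveAt l (G * H) = 0 := by
  simp only [weightFiveAt, coeff₂_mul, Finset.Nat.sum_antidiagonal_eq_sum_range_succ_mk,
    Finset.sum_range_succ, Finset.sum_range_zero, Nat.reduceSub, coeff₂_zero_zero, hG, hH,
    zero_mul, mul_zero, zero_add, add_zero] at h20 h11 h02 h21 h40 ⊢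
  have hG01 : coeff₂ 0 1 G ≠ 0 := left_ne_zero_of_mul (h02 ▸ hu)
  have hH01 : coeff₂ 0 1 H ≠ 0 := right_ne_zero_of_mul (h02 ▸ hu)
  obtain ⟨hG10, hH10⟩ : coeff₂ 1 0 G = 0 ∧ coeff₂ 1 0 H = 0 := by
    rcases mul_eq_zero.mp h20 with h | h
    · exact ⟨h, by simpa [h, hG01] using h11⟩
    · exact ⟨by simpa [h, hH01] using h11, h⟩
  simp only [hG10, hH10, zero_mul, mul_zero, add_zero, zero_add] at h21 h40 ⊢
  obtain ⟨hG20, hH20⟩ := eq_neg_mul_of_mul_eq_sq hu h02 (by linear_combination h21) h40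
  rw [hG20, hH20]
  ring

theorem irreducible_of_weightFiveAt_ne_zero {k : Type*} [Field k]
    {F : MvPowerSeries (Fin 2) k} {u l : k} (hF : 4 ≤ F.weightedOrder ![1, 2]) (hu : u ≠ 0)
    (h02 : coeff₂ 0 2 F = u) (h21 : coeff₂ 2 1 F = -2 * l * u) (h40 : coeff₂ 4 0 F = l ^ 2 * u)
    (h5 : weightFiveAt l F ≠ 0) :
    Irreducible F := by
  have hlow {i j : ℕ} (h : i + 2 * j < 4) : coeff₂ i j F = 0 :=
    coeff₂_eq_zero_of_lt_weightedOrder (lt_of_lt_of_le (by exact_mod_cast h) hF)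
  refine ⟨fun hunit => ?_, fun G H hGH => ?_⟩
  · rw [isUnit_iff_constantCoeff, ← coeff₂_zero_zero, hlow (by norm_num)] at hunit
    exact not_isUnit_zero hunit
  by_contra! hnu
  subst hGH
  simp only [isUnit_iff_constantCoeff, isUnit_iff_ne_zero, not_not] at hnu
  exact h5 (weightFiveAt_mul_eq_zero hnu.1 hnu.2 hu (hlow (by norm_num)) (hlow (by norm_num))
    h02 h21 h40)

end MvPowerSeries

open MvPolynomial

theorem polar_eq_sum_C_mul_X_pow {k : Type*} [CommRing k] {f : MvPolynomial (Fin 2) k} {c : k}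
    (hf : f = X 1 * (X 1 - X 0 ^ 2) * (2 * X 1 - C c * X 0 ^ 2)) (a b : k) :
    C a * pderiv 0 f + C b * pderiv 1 f =
      C (6 * b) * X 0 ^ 0 * X 1 ^ 2 + C (-2 * (c + 2) * b) * X 0 ^ 2 * X 1 ^ 1 +
        C (c * b) * X 0 ^ 4 * X 1 ^ 0 + C (-2 * (c + 2) * a) * X 0 ^ 1 * X 1 ^ 2 +
        C (4 * c * a) * X 0 ^ 3 * X 1 ^ 1 := by
  have h2 (i : Fin 2) : pderiv i (2 : MvPolynomial (Fin 2) k) = 0 := by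
    simpa using (pderiv i).map_natCast 2
  simp [hf, h2, pderiv_X, map_ofNat C]
  ring

theorem irreducible_polar {k : Type*} [Field k] [CharZero k] {f : MvPolynomial (Fin 2) k}
    {a b c : k} (hf : f = X 1 * (X 1 - X 0 ^ 2) * (2 * X 1 - C c * X 0 ^ 2))
    (hc : c ^ 2 - 2 * c + 4 = 0) (ha : a ≠ 0) (hb : b ≠ 0) :
    Irreducible ((C a * pderiv 0 f + C b * pderiv 1 f : MvPolynomial (Fin 2) k) :
      MvPowerSeries (Fin 2) k) := by
  have hc0 : c ≠ 0 := by rintro rfl; norm_num at hc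
  have hc2 : c + 2 ≠ 0 := by
    intro h; rw [eq_neg_of_add_eq_zero_left h] at hc; norm_num at hc
  rw [polar_eq_sum_C_mul_X_pow hf]
  simp only [coe_add, coe_mul, coe_pow, coe_C, coe_X]
  -- `hc` says exactly that the weight-4 part is `6b (y - (c+2)/6 x²)²`
  apply MvPowerSeries.irreducible_of_weightFiveAt_ne_zero (u := 6 * b) (l := (c + 2) / 6)
  case hF =>
    refine MvPowerSeries.le_weightedOrder_of_coeff₂ (n := 4) fun i j hij => ?_
    simp only [map_add, MvPowerSeries.coeff₂_C_mul_X_pow_mul_X_pow]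
    split_ifs <;> first | (exfalso; omega) | simp
  case hu => exact mul_ne_zero (by norm_num) hb
  all_goals
    simp only [MvPowerSeries.weightFiveAt, map_add, MvPowerSeries.coeff₂_C_mul_X_pow_mul_X_pow]
    norm_num
  case h21 => ring
  case h40 => linear_combination (-b / 6) * hc
  case h5 =>
    intro h
    have : (c + 2) * c * a = 0 := by linear_combination 3 * h + (c + 2) * a / 6 * hc
    simp [hc2, hc0, ha] at this

/-- for `f = y(y − x²)(2y − (1 + i√3)x²)`, for all but finitely many
directions `[a : b]` of the projective line, the polar `a·∂f/∂x + b·∂f/∂y` is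
irreducible as a formal power series in two variables. -/
theorem stmt8 (f : MvPolynomial (Fin 2) ℂ)
    (hf : f = MvPolynomial.X 1 * (MvPolynomial.X 1 - MvPolynomial.X 0 ^ 2) *
      (2 * MvPolynomial.X 1 -
        MvPolynomial.C (1 + Complex.I * (Real.sqrt 3 : ℂ)) * MvPolynomial.X 0 ^ 2)) :
    ∃ S : Set (Projectivization ℂ (Fin 2 → ℂ)), S.Finite ∧
      ∀ (a b : ℂ) (h : ![a, b] ≠ 0), Projectivization.mk ℂ ![a, b] h ∉ S →
        Irreducible ((MvPolynomial.coeToMvPowerSeries.ringHom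
          (MvPolynomial.C a * MvPolynomial.pderiv 0 f +
            MvPolynomial.C b * MvPolynomial.pderiv 1 f) : MvPowerSeries (Fin 2) ℂ)) := by
  refine ⟨{Projectivization.mk ℂ ![1, 0] (by simp), Projectivization.mk ℂ ![0, 1] (by simp)},
    Set.toFinite _, fun a b hab hS => ?_⟩
  have ha : a ≠ 0 := by
    rintro rfl
    exact hS (Or.inr ((Projectivization.mk_eq_mk_iff' ..).mpr ⟨b, by simp⟩))
  have hb : b ≠ 0 := by
    rintro rfl
    exact hS (Or.inl ((Projectivization.mk_eq_mk_iff' ..).mpr ⟨a, by simp⟩))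
  have hc : (1 + Complex.I * (Real.sqrt 3 : ℂ)) ^ 2 - 2 * (1 + Complex.I * (Real.sqrt 3 : ℂ)) + 4
      = 0 := by
    have h3 : ((Real.sqrt 3 : ℝ) : ℂ) ^ 2 = 3 := by
      rw [← Complex.ofReal_pow, Real.sq_sqrt (by norm_num)]; norm_num
    linear_combination (-1 : ℂ) * h3 + ((Real.sqrt 3 : ℝ) : ℂ) ^ 2 * Complex.I_sq
  exact irreducible_polar hf hc ha hb
end

section
/- Let g = y³ − x⁴y ∈ ℂ[x, y] (so g = y(y − x²)(y + x²)). For every (a, b) ∈ ℂ² with b ≠ 0, there exist formal power series η₁, η₂ ∈ ℂ⟦x⟧ such that, as polynomials in y with coefficients in ℂ⟦x⟧, a·∂g/∂x + b·∂g/∂y = 3b·(y − η₁)·(y − η₂), each of η₁ and η₂ has order exactly 2, and the power series η₁ − η₂ has order exactly 2. -/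
/-!
The polar `a g_x + b g_y = 3b y² - 4a x³ y - b x⁴` is a quadratic in `y` with discriminant
`4x⁴ (4a² x² + 3b²)`. As `3b² ≠ 0`, Hensel's lemma gives a power series `w` with
`w² = 4a² x² + 3b²` and `w(0) ≠ 0`, so the roots `x² (2a x ± w) / (3b)` and their difference
`2x² w / (3b)` are each `x²` times a unit.
-/

namespace PowerSeries

theorem exists_mul_self_eq_and_constantCoeff_eq {R : Type*} [CommRing R] (h2 : IsUnit (2 : R))
    {f : PowerSeries R} {c : R} (hc : IsUnit c) (hf : constantCoeff f = c * c) :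
    ∃ w : PowerSeries R, w * w = f ∧ constantCoeff w = c := by
  set p : Polynomial (PowerSeries R) := Polynomial.X ^ 2 - Polynomial.C f
  have hp_eval : p.eval (C c) ∈ Ideal.span {X} := by
    rw [Ideal.mem_span_singleton, X_dvd_iff]
    simp [p, hf, sq]
  have hp_simple : IsUnit (Ideal.Quotient.mk (Ideal.span {X}) (p.derivative.eval (C c))) := by
    have hderiv : p.derivative.eval (C c) = C (2 * c) := by
      simp [p, map_mul, map_ofNat, one_add_one_eq_two]
    rw [hderiv]
    exact ((h2.mul hc).map C).map _
  obtain ⟨w, hroot, hw⟩ := HenselianRing.is_henselian p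
    (Polynomial.monic_X_pow_sub_C f two_ne_zero) (C c) hp_eval hp_simple
  refine ⟨w, ?_, ?_⟩
  · rwa [Polynomial.IsRoot.def, Polynomial.eval_sub, Polynomial.eval_pow, Polynomial.eval_X,
      Polynomial.eval_C, sub_eq_zero, sq] at hroot
  · rwa [Ideal.mem_span_singleton, X_dvd_iff, map_sub, sub_eq_zero, constantCoeff_C] at hw

theorem order_X_pow_mul_of_constantCoeff_ne_zero {R : Type*} [Semiring R] (n : ℕ)
    {f : PowerSeries R} (hf : constantCoeff f ≠ 0) : (X ^ n * f).order = (n : ℕ∞) := by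
  rw [order_eq_nat]
  exact ⟨by simpa [coeff_X_pow_mul'] using hf, fun i hi => by simp [coeff_X_pow_mul', hi.not_ge]⟩

end PowerSeries

theorem Polynomial.C_mul_X_sq_add_C_mul_X_add_C_eq {S : Type*} [CommRing S] {a b c x₁ x₂ : S}
    (hb : b = -a * (x₁ + x₂)) (hc : c = a * x₁ * x₂) :
    C a * X ^ 2 + C b * X + C c = C a * (X - C x₁) * (X - C x₂) := by
  simp only [hb, hc, map_mul, map_add, map_neg]
  ring

theorem polar_quadratic_eq_mul {S : Type*} [CommRing S] {a b k x w : S} (hk : 3 * b * k = 1)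
    (hw : w * w = 4 * a ^ 2 * x ^ 2 + 3 * b ^ 2) :
    Polynomial.C (3 * b) * Polynomial.X ^ 2 + Polynomial.C (-(4 * a * x ^ 3)) * Polynomial.X
        + Polynomial.C (-(b * x ^ 4)) =
      Polynomial.C (3 * b) * (Polynomial.X - Polynomial.C (x ^ 2 * (k * (2 * a * x + w)))) *
        (Polynomial.X - Polynomial.C (x ^ 2 * (k * (2 * a * x - w)))) := by
  apply Polynomial.C_mul_X_sq_add_C_mul_X_add_C_eq
  · linear_combination (4 * a * x ^ 3) * hk
  · linear_combination (3 * b * x ^ 4 * k ^ 2) * hw + (b * x ^ 4) * (3 * b * k + 1) * hk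

open PowerSeries in
theorem aeval_polar_eq {R : Type*} [CommRing R] (a b : R) :
    MvPolynomial.aeval ![Polynomial.C (X : PowerSeries R), Polynomial.X]
        (MvPolynomial.C a *
            MvPolynomial.pderiv 0 (MvPolynomial.X 1 ^ 3 - MvPolynomial.X 0 ^ 4 * MvPolynomial.X 1) +
          MvPolynomial.C b *
            MvPolynomial.pderiv 1 (MvPolynomial.X 1 ^ 3 - MvPolynomial.X 0 ^ 4 * MvPolynomial.X 1)) =
      Polynomial.C (3 * C b) * Polynomial.X ^ 2 + Polynomial.C (-(4 * C a * X ^ 3)) * Polynomial.X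
        + Polynomial.C (-(C b * X ^ 4)) := by
  simp [MvPolynomial.pderiv_X, map_ofNat]
  ring

open PowerSeries in
/-- for `g = y³ − x⁴y`, for every direction `(a, b)` with `b ≠ 0`,
the polar `a·∂g/∂x + b·∂g/∂y`, regarded as a polynomial in `y` over `ℂ⟦x⟧`,
factors as `3b·(y − η₁)(y − η₂)` where `η₁, η₂` and `η₁ − η₂` all have order
exactly `2`. -/
theorem stmt9 (g : MvPolynomial (Fin 2) ℂ)
    (hg : g = MvPolynomial.X 1 ^ 3 - MvPolynomial.X 0 ^ 4 * MvPolynomial.X 1)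
    (Φ : MvPolynomial (Fin 2) ℂ →ₐ[ℂ] Polynomial (PowerSeries ℂ))
    (hΦ : Φ = MvPolynomial.aeval
      ![Polynomial.C (PowerSeries.X : PowerSeries ℂ), Polynomial.X])
    (a b : ℂ) (hb : b ≠ 0) :
    ∃ η₁ η₂ : PowerSeries ℂ,
      Φ (MvPolynomial.C a * MvPolynomial.pderiv 0 g +
          MvPolynomial.C b * MvPolynomial.pderiv 1 g) =
        Polynomial.C (PowerSeries.C (R := ℂ) (3 * b)) *
          (Polynomial.X - Polynomial.C η₁) * (Polynomial.X - Polynomial.C η₂) ∧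
      η₁.order = 2 ∧ η₂.order = 2 ∧ (η₁ - η₂).order = 2 := by
  subst hg hΦ
  obtain ⟨c, hc⟩ := IsAlgClosed.exists_eq_mul_self (3 * b ^ 2)
  have hc0 : c ≠ 0 := by
    rintro rfl
    simp_all
  obtain ⟨w, hw, hw0⟩ := exists_mul_self_eq_and_constantCoeff_eq
    (f := 4 * C a ^ 2 * X ^ 2 + 3 * C b ^ 2) (Ne.isUnit two_ne_zero) hc0.isUnit
    (by simp [← hc, map_ofNat])
  have h3b : C (3 * b) = 3 * C b := by rw [map_mul, map_ofNat]
  have hk : 3 * C b * C (3 * b)⁻¹ = 1 := by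
    rw [← h3b, ← map_mul, mul_inv_cancel₀ (mul_ne_zero three_ne_zero hb), map_one]
  refine ⟨X ^ 2 * (C (3 * b)⁻¹ * (2 * C a * X + w)), X ^ 2 * (C (3 * b)⁻¹ * (2 * C a * X - w)),
    ?_, ?_, ?_, ?_⟩
  · rw [aeval_polar_eq, h3b]
    exact polar_quadratic_eq_mul hk hw
  · exact order_X_pow_mul_of_constantCoeff_ne_zero 2 (by simp [hw0, hb, hc0])
  · exact order_X_pow_mul_of_constantCoeff_ne_zero 2 (by simp [hw0, hb, hc0])
  · rw [← mul_sub, ← mul_sub, add_sub_sub_cancel, ← two_mul]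
    exact order_X_pow_mul_of_constantCoeff_ne_zero 2 (by simp [hw0, hb, hc0, map_ofNat])
end
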